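/- arXiv:1409.2362 — 4 statements merged into one kernel-verified Lean document; each statement's English description precedes it below -/
import Mathlib

section
/- Let $0=t_0<t_1<t_2<\cdots$ be a sequence of real numbers and let $J_{kn}$ be vectors in $\mathbb{R}^d$ indexed by pairs of naturals $k \le n$. Suppose there are constants $C_1, C_2, \gamma > 0$ and $\alpha > 1$ such that whenever $|t_k - t_\ell| \le \tfrac12 |t_n - t_k|$ and $|t_{\ell+1} - t_n| \le \tfrac12 |t_n - t_k|$ (with $k \le \ell < n$), we have $\|J_{kn}\| \le \|J_{k\ell}\|(1 + C_1 |t_n - t_k|^\gamma) + \|J_{\ell+1,n}\| + C_2 |t_n - t_k|^\alpha$. Suppose also $J_{kk} = 0$ and $\|J_{k,k+1}\| \le L |t_{k+1}-t_k|^\alpha$ where $L = 2C_2/(1 - 2^{1-\alpha})$. Then $\|J_{kn}\| \le L |t_n - t_k|^\alpha$ whenever $|t_n - t_k| \le \delta$, where $\delta > 0$ is defined by $2^{1-\alpha} C_1 \delta^\gamma = 1 - 2^{1-\alpha}$. -/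
lemma stmt0_aux (L s c H C2 : ℝ) (hL0 : 0 < L) (hH0 : 0 ≤ H) (hc0 : 0 ≤ c)
    (hcb : s * c ≤ 1 - s) (hC2 : C2 = L * (1 - s) / 2) :
    L * (H * s / 2) * (1 + c) + L * (H * s / 2) + C2 * H ≤ L * H := by
  rw [hC2]
  nlinarith [mul_nonneg (mul_nonneg hH0 hL0.le) (show (0:ℝ) ≤ 1 - s - s * c by linarith)]

theorem stmt0 {d : ℕ} (t : ℕ → ℝ) (ht0 : t 0 = 0) (htmono : StrictMono t)
    (J : ℕ → ℕ → EuclideanSpace ℝ (Fin d))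
    (C1 C2 γ α L δ : ℝ) (hC1 : 0 < C1) (hC2 : 0 < C2) (hγ : 0 < γ) (hα : 1 < α)
    (hL : L = 2 * C2 / (1 - 2 ^ (1 - α)))
    (hδ : 0 < δ) (hδeq : 2 ^ (1 - α) * C1 * δ ^ γ = 1 - 2 ^ (1 - α))
    (hrec : ∀ k ℓ n : ℕ, k ≤ ℓ → ℓ < n →
      |t k - t ℓ| ≤ (1/2) * |t n - t k| → |t (ℓ+1) - t n| ≤ (1/2) * |t n - t k| →
      ‖J k n‖ ≤ ‖J k ℓ‖ * (1 + C1 * |t n - t k| ^ γ) + ‖J (ℓ+1) n‖ + C2 * |t n - t k| ^ α)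
    (hdiag : ∀ k, J k k = 0)
    (hstep : ∀ k, ‖J k (k+1)‖ ≤ L * |t (k+1) - t k| ^ α) :
    ∀ k n : ℕ, k ≤ n → |t n - t k| ≤ δ → ‖J k n‖ ≤ L * |t n - t k| ^ α := by
  classical
  set s : ℝ := 2 ^ (1 - α) with hs
  have hs0 : 0 < s := Real.rpow_pos_of_pos (by norm_num) _
  have hs1 : s < 1 := Real.rpow_lt_one_of_one_lt_of_neg (by norm_num) (by linarith)
  have hL0 : 0 < L := by
    rw [hL]; exact div_pos (by linarith) (by linarith)
  have hC2' : C2 = L * (1 - s) / 2 := by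
    have hne : (1:ℝ) - s ≠ 0 := by linarith
    rw [hL, div_mul_cancel₀ _ hne]; ring
  have hmono : Monotone t := htmono.monotone
  have habs : ∀ i j : ℕ, i ≤ j → |t j - t i| = t j - t i := fun i j hij =>
    abs_of_nonneg (by linarith [hmono hij])
  have h2s : (2:ℝ) ^ α * s = 2 := by
    rw [hs, ← Real.rpow_add (by norm_num : (0:ℝ) < 2)]
    norm_num
  have h2α : (0:ℝ) < 2 ^ α := Real.rpow_pos_of_pos (by norm_num) _
  have main : ∀ m : ℕ, ∀ k n : ℕ, n - k = m → k ≤ n → |t n - t k| ≤ δ →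
      ‖J k n‖ ≤ L * |t n - t k| ^ α := by
    intro m
    induction m using Nat.strong_induction_on with
    | _ m ih =>
    intro k n hm hkn hδn
    rcases eq_or_lt_of_le hkn with rfl | hlt
    · simp only [hdiag, norm_zero, sub_self, abs_zero]
      rw [Real.zero_rpow (by linarith : α ≠ 0), mul_zero]
    · set h := t n - t k with hh
      have hpos : 0 < h := by have := htmono hlt; simp [hh]; linarith
      have habsn : |t n - t k| = h := abs_of_pos hpos
      rw [habsn] at hδn ⊢
      set P : ℕ → Prop := fun j => t j - t k ≤ h / 2 with hP
      set ℓ := Nat.findGreatest P n with hℓ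
      have hPk : P k := by simp only [hP, sub_self]; linarith
      have hkℓ : k ≤ ℓ := Nat.le_findGreatest hkn hPk
      have hℓn : ℓ ≤ n := Nat.findGreatest_le n
      have hPℓ : P ℓ := Nat.findGreatest_spec hkn hPk
      have hPn : ¬ P n := by simp only [hP, ← hh]; push_neg; linarith
      have hℓlt : ℓ < n := lt_of_le_of_ne hℓn (fun he => hPn (he ▸ hPℓ))
      have hPsℓ : ¬ P (ℓ + 1) := Nat.findGreatest_is_greatest (Nat.lt_succ_self _) hℓlt
      have h1 : t ℓ - t k ≤ h / 2 := hPℓ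
      have h2 : h / 2 < t (ℓ+1) - t k := by
        simp only [hP] at hPsℓ; push_neg at hPsℓ; exact hPsℓ
      have h3 : t n - t (ℓ+1) ≤ h / 2 := by simp only [hh] at *; linarith
      have habsA : |t ℓ - t k| = t ℓ - t k := habs k ℓ hkℓ
      have habsB : |t n - t (ℓ+1)| = t n - t (ℓ+1) := habs (ℓ+1) n hℓlt
      have hA0 : 0 ≤ t ℓ - t k := by linarith [hmono hkℓ]
      have hB0 : 0 ≤ t n - t (ℓ+1) := by linarith [hmono (show ℓ+1 ≤ n from hℓlt)]
      -- recursion inequality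
      have E1 := hrec k ℓ n hkℓ hℓlt
        (by rw [abs_sub_comm, habsA, habsn]; linarith)
        (by rw [abs_sub_comm, habsB, habsn]; linarith)
      rw [habsn] at E1
      -- induction hypotheses
      have ihA : ‖J k ℓ‖ ≤ L * |t ℓ - t k| ^ α :=
        ih (ℓ - k) (by omega) k ℓ rfl hkℓ (by rw [habsA]; linarith)
      have ihB : ‖J (ℓ+1) n‖ ≤ L * |t n - t (ℓ+1)| ^ α :=
        ih (n - (ℓ+1)) (by omega) (ℓ+1) n rfl hℓlt (by rw [habsB]; linarith)
      -- rpow bounds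
      have hα0 : 0 ≤ α := by linarith
      have bA : |t ℓ - t k| ^ α ≤ (h/2) ^ α :=
        Real.rpow_le_rpow (abs_nonneg _) (by rw [habsA]; linarith) hα0
      have bB : |t n - t (ℓ+1)| ^ α ≤ (h/2) ^ α :=
        Real.rpow_le_rpow (abs_nonneg _) (by rw [habsB]; linarith) hα0
      have halfpow : (h/2) ^ α = h ^ α * s / 2 := by
        rw [Real.div_rpow hpos.le (by norm_num : (0:ℝ) ≤ 2),
          div_eq_div_iff (by positivity : (2:ℝ) ^ α ≠ 0) (by norm_num : (2:ℝ) ≠ 0),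
          mul_assoc, mul_comm s, h2s]
      set c : ℝ := C1 * h ^ γ with hc
      set H : ℝ := h ^ α with hH
      have hH0 : 0 ≤ H := Real.rpow_nonneg hpos.le _
      have hc0 : 0 ≤ c := mul_nonneg hC1.le (Real.rpow_nonneg hpos.le _)
      have hcb : s * c ≤ 1 - s := by
        have : h ^ γ ≤ δ ^ γ := Real.rpow_le_rpow hpos.le hδn hγ.le
        calc s * c = s * C1 * h ^ γ := by rw [hc]; ring
        _ ≤ s * C1 * δ ^ γ := by
            apply mul_le_mul_of_nonneg_left this (by positivity)
        _ = 1 - s := hδeq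
      have ihA' : ‖J k ℓ‖ ≤ L * (H * s / 2) := by
        calc ‖J k ℓ‖ ≤ L * |t ℓ - t k| ^ α := ihA
        _ ≤ L * (h/2) ^ α := mul_le_mul_of_nonneg_left bA hL0.le
        _ = L * (H * s / 2) := by rw [halfpow]
      have ihB' : ‖J (ℓ+1) n‖ ≤ L * (H * s / 2) := by
        calc ‖J (ℓ+1) n‖ ≤ L * |t n - t (ℓ+1)| ^ α := ihB
        _ ≤ L * (h/2) ^ α := mul_le_mul_of_nonneg_left bB hL0.le
        _ = L * (H * s / 2) := by rw [halfpow]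
      have EA : ‖J k ℓ‖ * (1 + c) ≤ L * (H * s / 2) * (1 + c) :=
        mul_le_mul_of_nonneg_right ihA' (by linarith)
      have key := stmt0_aux L s c H C2 hL0 hH0 hc0 hcb hC2'
      linarith [E1, EA, ihB', key]
  intro k n hkn hδn
  exact main (n - k) k n rfl hkn hδn
end

section
/- Let $W^1, \dots, W^m$ be standard Brownian motions on $[0,T]$ and suppose $C_\delta$ is a random variable such that $|W^i(t) - W^i(s)| \le C_\delta |t-s|^{(1-\delta)/2}$ for all $i$ and all $0 \le s, t \le T$, where $0 < \delta < 1$. Let $0 = \tau_0 < \cdots < \tau_N = T$ be a partition, $h > 0$, $\alpha > 0$, and suppose for each $n \le N-2$: either $\tau_{n+1} - \tau_n = h$, or $\tau_{n+1} - \tau_n < h$ and there exist indices $i, j \in \{1,\dots,m\}$ with $\|q_{ij}(y_n)\|^{1/2} |W^i(\tau_{n+1}) - W^i(\tau_n)| = \alpha h^{1/2}$, where the matrix-valued quantities satisfy $\|q_{ij}(y_n)\| \le \bar{g}^2$ for a constant $\bar{g}$. Then $h \le K |\tau_{n+1} - \tau_n|^{1-\delta}$ for all $n \le N-2$, where $K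 = T^\delta + C_\delta^2 \bar{g}^2 / \alpha^2$. -/
theorem stmt4 (m : ℕ) (hm : 0 < m) (T : ℝ) (hT : 0 < T)
    (W : Fin m → ℝ → ℝ) (δ : ℝ) (hδ : 0 < δ) (hδ1 : δ < 1) (Cδ : ℝ)
    (hholder : ∀ i : Fin m, ∀ s t : ℝ, 0 ≤ s → s ≤ T → 0 ≤ t → t ≤ T →
      |W i t - W i s| ≤ Cδ * |t - s| ^ ((1 - δ) / 2))
    (N : ℕ) (hN : 2 ≤ N) (τ : ℕ → ℝ) (hτ0 : τ 0 = 0) (hτN : τ N = T)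
    (hmono : ∀ k < N, τ k < τ (k+1))
    (h α gbar : ℝ) (hh : 0 < h) (hα : 0 < α)
    (Q : ℕ → Fin m → Fin m → ℝ) (hQ0 : ∀ n i j, 0 ≤ Q n i j) (hQ : ∀ n i j, Q n i j ≤ gbar ^ 2)
    (hstep : ∀ n, n ≤ N - 2 →
      τ (n+1) - τ n = h ∨ (τ (n+1) - τ n < h ∧ ∃ i j : Fin m,
        (Q n i j) ^ ((1:ℝ)/2) * |W i (τ (n+1)) - W i (τ n)| = α * h ^ ((1:ℝ)/2))) :
    ∀ n, n ≤ N - 2 → h ≤ (T ^ δ + Cδ ^ 2 * gbar ^ 2 / α ^ 2) * (τ (n+1) - τ n) ^ (1 - δ) := by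
  -- monotonicity of τ
  have mono : ∀ a b : ℕ, a ≤ b → b ≤ N → τ a ≤ τ b := by
    intro a b hab hbN
    induction b with
    | zero => simp_all
    | succ k ih =>
      rcases Nat.lt_or_ge a (k+1) with hk | hk
      · exact le_trans (ih (by omega) (by omega)) (le_of_lt (hmono k (by omega)))
      · have : a = k + 1 := by omega
        simp [this]
  intro n hn
  have hn1 : n + 1 ≤ N := by omega
  have hτn0 : 0 ≤ τ n := by rw [← hτ0]; exact mono 0 n (by omega) (by omega)
  have hτn1T : τ (n+1) ≤ T := by rw [← hτN]; exact mono (n+1) N hn1 le_rfl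
  have hτnT : τ n ≤ T := le_trans (le_of_lt (hmono n (by omega))) hτn1T
  set d := τ (n+1) - τ n with hd
  have hdpos : 0 < d := by
    have := hmono n (by omega)
    simp [hd]; linarith
  have hdT : d ≤ T := by simp [hd]; linarith
  have hdpow : (0:ℝ) < d ^ (1 - δ) := Real.rpow_pos_of_pos hdpos _
  have hCδ : 0 ≤ Cδ := by
    have i : Fin m := ⟨0, hm⟩
    have := hholder i 0 T le_rfl hT.le hT.le le_rfl
    have h0 : (0:ℝ) ≤ Cδ * |T - 0| ^ ((1-δ)/2) := le_trans (abs_nonneg _) this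
    have hT0 : (0:ℝ) < |T - 0| ^ ((1-δ)/2) := by
      apply Real.rpow_pos_of_pos; simp [abs_of_pos hT]; exact hT
    nlinarith
  rcases hstep n hn with heq | ⟨hlt, i, j, hij⟩
  · -- d = h case : h ≤ T^δ * d^(1-δ)
    have key : h ≤ T ^ δ * d ^ (1 - δ) := by
      have : h = h ^ δ * h ^ (1 - δ) := by
        rw [← Real.rpow_add hh]; simp
      rw [this, ← heq]
      have h1 : d ^ δ ≤ T ^ δ :=
        Real.rpow_le_rpow hdpos.le hdT hδ.le
      exact mul_le_mul h1 le_rfl hdpow.le (Real.rpow_nonneg hT.le _)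
    have hextra : 0 ≤ Cδ ^ 2 * gbar ^ 2 / α ^ 2 * d ^ (1 - δ) := by positivity
    nlinarith
  · -- exit condition case
    have hW := hholder i (τ n) (τ (n+1)) hτn0 hτnT (le_trans hτn0 (hmono n (by omega)).le) hτn1T
    have habs : |τ (n+1) - τ n| = d := by rw [abs_of_pos hdpos]
    rw [habs] at hW
    have hQij := hQ0 n i j
    have hQs : (0:ℝ) ≤ (Q n i j) ^ ((1:ℝ)/2) := Real.rpow_nonneg hQij _
    have hQle : (Q n i j) ^ ((1:ℝ)/2) ≤ (gbar ^ 2) ^ ((1:ℝ)/2) :=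
      Real.rpow_le_rpow hQij (hQ n i j) (by norm_num)
    have hWnn : (0:ℝ) ≤ |W i (τ (n+1)) - W i (τ n)| := abs_nonneg _
    have hRHSnn : (0:ℝ) ≤ Cδ * d ^ ((1-δ)/2) := le_trans hWnn hW
    have chain : α * h ^ ((1:ℝ)/2) ≤ (gbar ^ 2) ^ ((1:ℝ)/2) * (Cδ * d ^ ((1-δ)/2)) := by
      rw [← hij]
      calc (Q n i j) ^ ((1:ℝ)/2) * |W i (τ (n+1)) - W i (τ n)|
          ≤ (Q n i j) ^ ((1:ℝ)/2) * (Cδ * d ^ ((1-δ)/2)) :=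
            mul_le_mul_of_nonneg_left hW hQs
        _ ≤ (gbar ^ 2) ^ ((1:ℝ)/2) * (Cδ * d ^ ((1-δ)/2)) :=
            mul_le_mul_of_nonneg_right hQle hRHSnn
    have hLnn : (0:ℝ) ≤ α * h ^ ((1:ℝ)/2) := by positivity
    have sq : (α * h ^ ((1:ℝ)/2)) ^ 2 ≤ ((gbar ^ 2) ^ ((1:ℝ)/2) * (Cδ * d ^ ((1-δ)/2))) ^ 2 :=
      pow_le_pow_left₀ hLnn chain 2
    have e1 : (h ^ ((1:ℝ)/2)) ^ 2 = h := by
      rw [← Real.rpow_natCast (h ^ ((1:ℝ)/2)) 2, ← Real.rpow_mul hh.le]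
      norm_num
    have e2 : ((gbar ^ 2) ^ ((1:ℝ)/2)) ^ 2 = gbar ^ 2 := by
      rw [← Real.rpow_natCast ((gbar ^ 2) ^ ((1:ℝ)/2)) 2,
        ← Real.rpow_mul (by positivity : (0:ℝ) ≤ gbar ^ 2)]
      norm_num
    have e3 : (d ^ ((1-δ)/2)) ^ 2 = d ^ (1 - δ) := by
      rw [← Real.rpow_natCast (d ^ ((1-δ)/2)) 2, ← Real.rpow_mul hdpos.le]
      norm_num
    have sq' : α ^ 2 * h ≤ gbar ^ 2 * (Cδ ^ 2 * d ^ (1 - δ)) := by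
      have := sq
      rw [mul_pow, mul_pow, mul_pow, e1, e2, e3] at this
      linarith
    have hα2 : (0:ℝ) < α ^ 2 := by positivity
    have key : h ≤ Cδ ^ 2 * gbar ^ 2 / α ^ 2 * d ^ (1 - δ) := by
      rw [div_mul_eq_mul_div, le_div_iff₀ hα2]
      nlinarith
    have hTd : 0 ≤ T ^ δ * d ^ (1 - δ) := by positivity
    rw [add_mul]
    linarith
end

section
/- Let $0 < \delta < 1$, $h, \alpha > 0$, $0 = \tau_0 < \cdots < \tau_N = T$, and suppose $C_\delta$ is a random variable such that $\left|\int_s^t \int_s^u dW^i(r)\,dW^j(u)\right| \le C_\delta |t-s|^{1-\delta}$ for all $i,j \in \{1,\dots,m\}$ and $0 \le s < t \le T$. Suppose for each $k \le N-2$: either $\tau_{k+1} - \tau_k = h$, or $\tau_{k+1} - \tau_k < h$ and for some $i,j$, $\|q_{ij}(y_k)\| \left|\int_{\tau_k}^{\tau_{k+1}} \int_{\tau_k}^s dW^i(r)\,dW^j(s)\right| = \tfrac12 \alpha^2 h$, where $\|q_{ij}(y_k)\| \le \bar{g}^2$. Then $h \le K |\tau_{k+1} - \tau_k|^{1-\delta}$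 for $k = 0, \dots, N-2$, with $K = T^\delta + 2 C_\delta \bar{g}^2/\alpha^2$. -/
theorem stmt5 (m : ℕ) (hm : 0 < m) (T : ℝ) (hT : 0 < T)
    (A : Fin m → Fin m → ℝ → ℝ → ℝ) (δ : ℝ) (hδ : 0 < δ) (hδ1 : δ < 1) (Cδ : ℝ)
    (hholder : ∀ i j : Fin m, ∀ s t : ℝ, 0 ≤ s → s < t → t ≤ T →
      |A i j s t| ≤ Cδ * |t - s| ^ (1 - δ))
    (N : ℕ) (hN : 2 ≤ N) (τ : ℕ → ℝ) (hτ0 : τ 0 = 0) (hτN : τ N = T)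
    (hmono : ∀ k < N, τ k < τ (k+1))
    (h α gbar : ℝ) (hh : 0 < h) (hα : 0 < α)
    (Q : ℕ → Fin m → Fin m → ℝ) (hQ0 : ∀ k i j, 0 ≤ Q k i j) (hQ : ∀ k i j, Q k i j ≤ gbar ^ 2)
    (hstep : ∀ k, k ≤ N - 2 →
      τ (k+1) - τ k = h ∨ (τ (k+1) - τ k < h ∧ ∃ i j : Fin m,
        (Q k i j) * |A i j (τ k) (τ (k+1))| = (1/2) * α ^ 2 * h)) :
    ∀ k, k ≤ N - 2 → h ≤ (T ^ δ + 2 * Cδ * gbar ^ 2 / α ^ 2) * (τ (k+1) - τ k) ^ (1 - δ) := by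
  -- monotonicity of τ on [0, N]
  have mono : ∀ a b : ℕ, a ≤ b → b ≤ N → τ a ≤ τ b := by
    intro a b hab hbN
    induction b with
    | zero => simp [Nat.le_zero.mp hab]
    | succ n ih =>
      rcases Nat.eq_or_lt_of_le hab with rfl | hlt
      · rfl
      · exact le_trans (ih (Nat.lt_succ_iff.mp hlt) (le_trans (Nat.le_succ n) hbN))
          (le_of_lt (hmono n (Nat.lt_of_succ_le hbN)))
  -- Cδ ≥ 0
  have i0 : Fin m := ⟨0, hm⟩
  have hCδ : 0 ≤ Cδ := by
    have := hholder i0 i0 0 T le_rfl hT le_rfl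
    have h1 : (0:ℝ) < |T - 0| ^ (1 - δ) := by
      apply Real.rpow_pos_of_pos
      rw [abs_pos]; linarith
    nlinarith [abs_nonneg (A i0 i0 0 T)]
  intro k hk
  have hk1 : k + 1 ≤ N := by omega
  have hkN : k < N := by omega
  have hstep' : 0 < τ (k+1) - τ k := sub_pos.mpr (hmono k hkN)
  have hτk0 : 0 ≤ τ k := hτ0 ▸ mono 0 k (Nat.zero_le k) (le_of_lt hkN)
  have hτk1T : τ (k+1) ≤ T := hτN ▸ mono (k+1) N hk1 le_rfl
  have hsT : τ (k+1) - τ k ≤ T := by linarith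
  have hpow_pos : 0 < (τ (k+1) - τ k) ^ (1 - δ) :=
    Real.rpow_pos_of_pos hstep' _
  rcases hstep k hk with heq | ⟨hlt, i, j, heq⟩
  · -- full step h
    rw [heq] at hsT ⊢
    have hsplit : h = h ^ δ * h ^ (1 - δ) := by
      rw [← Real.rpow_add hh]; simp
    have hTd : h ^ δ ≤ T ^ δ :=
      Real.rpow_le_rpow (le_of_lt hh) hsT (le_of_lt hδ)
    have hextra : 0 ≤ 2 * Cδ * gbar ^ 2 / α ^ 2 := by
      have hb : (0:ℝ) ≤ gbar ^ 2 := sq_nonneg _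
      positivity
    calc h = h ^ δ * h ^ (1-δ) := hsplit
      _ ≤ T ^ δ * h ^ (1-δ) := by
          apply mul_le_mul_of_nonneg_right hTd (le_of_lt (Real.rpow_pos_of_pos hh _))
      _ ≤ (T ^ δ + 2 * Cδ * gbar ^ 2 / α ^ 2) * h ^ (1-δ) := by
          apply mul_le_mul_of_nonneg_right _ (le_of_lt (Real.rpow_pos_of_pos hh _))
          linarith
  · -- exit condition holds with equality
    have habs : |A i j (τ k) (τ (k+1))| ≤ Cδ * (τ (k+1) - τ k) ^ (1 - δ) := by
      have := hholder i j (τ k) (τ (k+1)) hτk0 (hmono k hkN) hτk1T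
      rwa [abs_of_pos hstep'] at this
    have hQb : Q k i j ≤ gbar ^ 2 := hQ k i j
    have hQ0' : 0 ≤ Q k i j := hQ0 k i j
    have hA0 : 0 ≤ |A i j (τ k) (τ (k+1))| := abs_nonneg _
    have key : (1/2) * α ^ 2 * h ≤ gbar ^ 2 * (Cδ * (τ (k+1) - τ k) ^ (1 - δ)) := by
      rw [← heq]
      have : Q k i j * |A i j (τ k) (τ (k+1))| ≤ gbar ^ 2 * |A i j (τ k) (τ (k+1))| :=
        mul_le_mul_of_nonneg_right hQb hA0
      refine le_trans this ?_
      apply mul_le_mul_of_nonneg_left habs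
      exact le_trans hQ0' hQb
    have hα2 : (0:ℝ) < α ^ 2 := by positivity
    have h2 : h ≤ (2 * Cδ * gbar ^ 2 / α ^ 2) * (τ (k+1) - τ k) ^ (1 - δ) := by
      rw [div_mul_eq_mul_div, le_div_iff₀ hα2]
      nlinarith
    have hTd0 : 0 ≤ T ^ δ * (τ (k+1) - τ k) ^ (1 - δ) := by
      have : (0:ℝ) ≤ T ^ δ := le_of_lt (Real.rpow_pos_of_pos hT _)
      positivity
    nlinarith
end

section
/- Let $u_{kn}$, $0 \le k \le n \le N$, be nonnegative reals with $u_{kk} = u_{k,k+1} = 0$, and let $0 = \tau_0 < \cdots < \tau_N = T$ with $h = \max_k |\tau_{k+1} - \tau_k|$. Fix $\epsilon \in (0, 1/2)$, $\gamma > 0$, and constants $D, L_S, R > 0$. Suppose that whenever $k \le \ell < n$ with $|\tau_k - \tau_\ell| \le \tfrac12|\tau_n - \tau_k|$ and $|\tau_n - \tau_{\ell+1}| \le \tfrac12|\tau_n - \tau_k|$, one has $u_{kn} \le u_{k\ell}\big(1 + D(L_S + 1)|\tau_n - \tau_k|^{1/2 - \epsilon}\big) + u_{\ell+1,n} + R\,D(L_S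 + 2)\,|\tau_n - \tau_k|^{1 + \epsilon/6}\, h^{\gamma - \epsilon}$. Then there exists a constant $M$ depending only on $\epsilon$, $T$, $D$, $L_S$ (and not on $R$, $h$, or $N$) such that $u_{0n} \le R\, M\, h^{\gamma - \epsilon}$ for all $n \le N$. -/
lemma aux_bound (C1 s Δ c0 : ℝ) (hC1 : 0 < C1) (hs : 0 < s) (hs1 : s ≤ 1)
    (hΔ : 0 < Δ) (hc0 : 0 < c0) :
    C1 * Δ ^ s ≤ c0 + (C1 * ((c0 / C1) ^ (1 / s)) ^ (s - 1)) * Δ := by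
  set δ := (c0 / C1) ^ (1 / s) with hδdef
  have hq : 0 < c0 / C1 := div_pos hc0 hC1
  have hδ : 0 < δ := Real.rpow_pos_of_pos hq _
  have hδs : δ ^ s = c0 / C1 := by
    rw [hδdef, ← Real.rpow_mul hq.le, one_div_mul_cancel hs.ne', Real.rpow_one]
  have hlam : 0 < C1 * δ ^ (s - 1) := by positivity
  rcases le_or_gt Δ δ with hle | hlt
  · have h1 : Δ ^ s ≤ δ ^ s := Real.rpow_le_rpow hΔ.le hle hs.le
    have h2 : C1 * Δ ^ s ≤ c0 := by
      calc C1 * Δ ^ s ≤ C1 * (c0 / C1) := by rw [← hδs]; nlinarith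
        _ = c0 := by field_simp
    nlinarith
  · have h1 : Δ ^ (s - 1) ≤ δ ^ (s - 1) :=
      Real.rpow_le_rpow_of_nonpos hδ hlt.le (by linarith)
    have h2 : Δ ^ s = Δ ^ (s - 1) * Δ := by
      rw [← Real.rpow_add_one hΔ.ne' (s-1)]; ring_nf
    have : C1 * Δ ^ s ≤ (C1 * δ ^ (s - 1)) * Δ := by
      rw [h2, ← mul_assoc]
      have := mul_le_mul_of_nonneg_right (mul_le_mul_of_nonneg_left h1 hC1.le) hΔ.le
      linarith
    nlinarith

lemma aux_step (ε C2 Δ lam x : ℝ) (hε : 0 < ε) (hΔ : 0 < Δ) (hC2 : 0 ≤ C2)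
    (hlam : 0 ≤ lam) (hx : 0 ≤ x)
    (hb : x ≤ ((2:ℝ) ^ (ε/6) - 1) + lam * Δ) :
    (C2 / (1 - (1 + (2:ℝ) ^ (-(ε/6))) / 2)) * (Δ/2) ^ ((1:ℝ) + ε/6) * Real.exp (lam * (Δ/2)) * (1 + x)
      + (C2 / (1 - (1 + (2:ℝ) ^ (-(ε/6))) / 2)) * (Δ/2) ^ ((1:ℝ) + ε/6) * Real.exp (lam * (Δ/2))
      + C2 * Δ ^ ((1:ℝ) + ε/6)
    ≤ (C2 / (1 - (1 + (2:ℝ) ^ (-(ε/6))) / 2)) * Δ ^ ((1:ℝ) + ε/6) * Real.exp (lam * Δ) := by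
  set a : ℝ := (2:ℝ) ^ (ε/6) with hadef
  have ha1 : 1 < a := by
    rw [hadef]
    exact Real.one_lt_rpow_iff_of_pos (by norm_num) |>.mpr (Or.inl ⟨by norm_num, by positivity⟩)
  have ha0 : 0 < a := by linarith
  have hainv : (2:ℝ) ^ (-(ε/6)) = a⁻¹ := by rw [Real.rpow_neg (by norm_num), hadef]
  have hqlt : (1 - (1 + (2:ℝ) ^ (-(ε/6))) / 2) = (a - 1) / (2 * a) := by
    rw [hainv]; field_simp; ring
  set K : ℝ := C2 / (1 - (1 + (2:ℝ) ^ (-(ε/6))) / 2) with hKdef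
  have hKval : K = 2 * a * C2 / (a - 1) := by
    rw [hKdef, hqlt, div_div_eq_mul_div]; ring
  have hK0 : 0 ≤ K := by
    rw [hKval]; exact div_nonneg (by positivity) (by linarith)
  set P : ℝ := (Δ/2) ^ ((1:ℝ) + ε/6) with hPdef
  set Q : ℝ := Δ ^ ((1:ℝ) + ε/6) with hQdef
  have hP0 : 0 ≤ P := Real.rpow_nonneg (by positivity) _
  have hQP : Q = 2 * a * P := by
    have h2a : (2:ℝ) ^ ((1:ℝ) + ε/6) = 2 * a := by
      rw [Real.rpow_add (by norm_num), Real.rpow_one, hadef]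
    rw [hPdef, hQdef, Real.div_rpow hΔ.le (by norm_num : (0:ℝ) ≤ 2), h2a]
    field_simp
  set E : ℝ := Real.exp (lam * (Δ/2)) with hEdef
  have hE0 : 0 < E := Real.exp_pos _
  have hE1 : 1 ≤ E := Real.one_le_exp (by positivity)
  have hEb : 1 + lam * (Δ/2) ≤ E := by
    have := Real.add_one_le_exp (lam * (Δ/2)); rw [hEdef]; linarith
  have hE2 : Real.exp (lam * Δ) = E * E := by
    rw [hEdef, ← Real.exp_add]; ring_nf
  have key1 : 2 + x ≤ (1 + a) * E := by
    have h1 : (1 + a) * (1 + lam * (Δ/2)) ≤ (1 + a) * E :=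
      mul_le_mul_of_nonneg_left hEb (by linarith)
    nlinarith [mul_nonneg (mul_nonneg (sub_nonneg.mpr ha1.le) hlam) hΔ.le]
  have keyK : K * (1 + a) + 2 * a * C2 = 2 * a * K := by
    have hne : a - 1 ≠ 0 := by   
      intro hcon; rw [sub_eq_zero] at hcon; exact absurd hcon.symm ha1.ne
    rw [hKval]; field_simp; ring
  rw [hE2]
  calc K * P * E * (1 + x) + K * P * E + C2 * Q
      = K * P * E * (2 + x) + 2 * a * C2 * P := by rw [hQP]; ring
    _ ≤ K * P * E * ((1 + a) * E) + 2 * a * C2 * P * (E * E) := by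
        have h1 : K * P * E * (2 + x) ≤ K * P * E * ((1 + a) * E) :=
          mul_le_mul_of_nonneg_left key1 (by positivity)
        have hEE : 1 ≤ E * E := by nlinarith
        have h2 : 2 * a * C2 * P ≤ 2 * a * C2 * P * (E * E) :=
          le_mul_of_one_le_right (by positivity) hEE
        linarith
    _ = P * (E * E) * (K * (1 + a) + 2 * a * C2) := by ring
    _ = P * (E * E) * (2 * a * K) := by rw [keyK]
    _ = K * Q * (E * E) := by rw [hQP]; ring

lemma aux_mono (K lam e x y : ℝ) (hK : 0 ≤ K) (hlam : 0 ≤ lam) (he : 0 ≤ e)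
    (hx : 0 ≤ x) (hxy : x ≤ y) :
    K * x ^ e * Real.exp (lam * x) ≤ K * y ^ e * Real.exp (lam * y) := by
  have h1 : x ^ e ≤ y ^ e := Real.rpow_le_rpow hx hxy he
  have h2 : Real.exp (lam * x) ≤ Real.exp (lam * y) :=
    Real.exp_le_exp.mpr (mul_le_mul_of_nonneg_left hxy hlam)
  have h3 : 0 ≤ K * x ^ e := mul_nonneg hK (Real.rpow_nonneg hx _)
  have h4 : K * x ^ e ≤ K * y ^ e := mul_le_mul_of_nonneg_left h1 hK
  exact mul_le_mul h4 h2 (Real.exp_pos _).le (mul_nonneg hK (Real.rpow_nonneg (hx.trans hxy) _))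

theorem stmt15 (ε T D LS : ℝ) (hε : 0 < ε) (hε2 : ε < 1/2) (hT : 0 < T)
    (hD : 0 < D) (hLS : 0 < LS) :
    ∃ M : ℝ, 0 < M ∧
      ∀ (N : ℕ) (τ : ℕ → ℝ) (u : ℕ → ℕ → ℝ) (h R γ : ℝ),
        0 < N → τ 0 = 0 → τ N = T → (∀ k < N, τ k < τ (k+1)) →
        (∀ k < N, τ (k+1) - τ k ≤ h) → (∃ k < N, τ (k+1) - τ k = h) →
        0 < R → 0 < γ →
        (∀ k n : ℕ, k ≤ n → n ≤ N → 0 ≤ u k n) →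
        (∀ k, u k k = 0) → (∀ k, u k (k+1) = 0) →
        (∀ k ℓ n : ℕ, k ≤ ℓ → ℓ < n → n ≤ N →
          |τ k - τ ℓ| ≤ (1/2) * |τ n - τ k| → |τ n - τ (ℓ+1)| ≤ (1/2) * |τ n - τ k| →
          u k n ≤ u k ℓ * (1 + D * (LS + 1) * |τ n - τ k| ^ ((1:ℝ)/2 - ε))
            + u (ℓ+1) n + R * D * (LS + 2) * |τ n - τ k| ^ (1 + ε/6) * h ^ (γ - ε)) →
        ∀ n ≤ N, u 0 n ≤ R * M * h ^ (γ - ε) := by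
  have hs : 0 < (1:ℝ)/2 - ε := by linarith
  have ha1 : 1 < (2:ℝ) ^ (ε/6) :=
    Real.one_lt_rpow_iff_of_pos (by norm_num) |>.mpr (Or.inl ⟨by norm_num, by positivity⟩)
  have hc0 : 0 < (2:ℝ) ^ (ε/6) - 1 := by linarith
  set lam : ℝ := D * (LS + 1) *
      ((((2:ℝ) ^ (ε/6) - 1) / (D * (LS + 1))) ^ (1 / ((1:ℝ)/2 - ε))) ^ ((1:ℝ)/2 - ε - 1)
    with hlamdef
  have hC1pos : 0 < D * (LS + 1) := by positivity
  have hlam : 0 < lam := by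
    rw [hlamdef]
    have := Real.rpow_pos_of_pos (div_pos hc0 hC1pos) (1 / ((1:ℝ)/2 - ε))
    positivity
  have hqpos : 0 < 1 - (1 + (2:ℝ) ^ (-(ε/6))) / 2 := by
    have : (2:ℝ) ^ (-(ε/6)) < 1 :=
      Real.rpow_lt_one_of_one_lt_of_neg (by norm_num) (by linarith)
    linarith
  refine ⟨D * (LS + 2) * T ^ ((1:ℝ) + ε/6) * Real.exp (lam * T)
      / (1 - (1 + (2:ℝ) ^ (-(ε/6))) / 2), ?_, ?_⟩
  · have h1 : 0 < T ^ ((1:ℝ) + ε/6) := Real.rpow_pos_of_pos hT _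
    have h2 : 0 < Real.exp (lam * T) := Real.exp_pos _
    exact div_pos (by positivity) hqpos
  intro N τ u h R γ hN hτ0 hτN hinc hub hex hR hγ hupos hukk hukk1 hrec
  -- monotonicity of τ
  have mono : ∀ j, j ≤ N → ∀ i, i ≤ j → τ i ≤ τ j := by
    intro j
    induction j with
    | zero => intro _ i hi; have : i = 0 := Nat.le_zero.mp hi; simp [this]
    | succ j ih =>
      intro hj i hi
      rcases Nat.eq_or_lt_of_le hi with rfl | hlt
      · exact le_rfl
      · have h1 : τ i ≤ τ j := ih (by omega) i (by omega)
        have h2 : τ j < τ (j+1) := hinc j (by omega)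
        linarith
  have smono : ∀ i j, i < j → j ≤ N → τ i < τ j := by
    intro i j hij hj
    have h1 : τ i < τ (i+1) := hinc i (by omega)
    have h2 : τ (i+1) ≤ τ j := mono j hj (i+1) hij
    linarith
  obtain ⟨k0, hk0N, hk0eq⟩ := hex
  have hh : 0 < h := by
    have := hinc k0 hk0N; rw [← hk0eq]; linarith
  have hC2 : 0 ≤ R * D * (LS + 2) * h ^ (γ - ε) := by positivity
  have hK0 : 0 ≤ R * D * (LS + 2) * h ^ (γ - ε) / (1 - (1 + (2:ℝ) ^ (-(ε/6))) / 2) :=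
    div_nonneg hC2 hqpos.le
  have hxb : ∀ Δ : ℝ, 0 < Δ →
      D * (LS + 1) * Δ ^ ((1:ℝ)/2 - ε) ≤ ((2:ℝ) ^ (ε/6) - 1) + lam * Δ := by
    intro Δ hΔ
    exact aux_bound (D * (LS + 1)) ((1:ℝ)/2 - ε) Δ ((2:ℝ) ^ (ε/6) - 1)
      hC1pos hs (by linarith) hΔ hc0
  -- main induction
  have key : ∀ m k n : ℕ, k ≤ n → n ≤ N → n - k ≤ m →
      u k n ≤ (R * D * (LS + 2) * h ^ (γ - ε) / (1 - (1 + (2:ℝ) ^ (-(ε/6))) / 2))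
        * (τ n - τ k) ^ ((1:ℝ) + ε/6) * Real.exp (lam * (τ n - τ k)) := by
    intro m
    induction m with
    | zero =>
      intro k n hkn hnN hm
      have hnk : n = k := by omega
      subst hnk
      rw [hukk]
      have hnn : (0:ℝ) ≤ τ n - τ n := by linarith
      exact mul_nonneg (mul_nonneg hK0 (Real.rpow_nonneg hnn _)) (Real.exp_pos _).le
    | succ m ih =>
      intro k n hkn hnN hm
      by_cases hsmall : n ≤ k + 1
      · rcases Nat.eq_or_lt_of_le hkn with rfl | hlt
        · rw [hukk]
          exact mul_nonneg (mul_nonneg hK0 (Real.rpow_nonneg (by linarith) _)) (Real.exp_pos _).le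
        · have : n = k + 1 := by omega
          subst this
          rw [hukk1]
          have : (0:ℝ) ≤ τ (k+1) - τ k := by
            have := smono k (k+1) (by omega) hnN; linarith
          exact mul_nonneg (mul_nonneg hK0 (Real.rpow_nonneg this _)) (Real.exp_pos _).le
      push_neg at hsmall
      have hk2 : k + 2 ≤ n := by omega
      have hΔpos : 0 < τ n - τ k := sub_pos.mpr (smono k n (by omega) hnN)
      -- choose splitting point
      set S := (Finset.Ico k n).filter (fun j => τ j - τ k ≤ (τ n - τ k) / 2) with hSdef
      have hkS : k ∈ S := by
        rw [hSdef, Finset.mem_filter, Finset.mem_Ico]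
        refine ⟨⟨le_rfl, by omega⟩, by simp; linarith⟩
      set ℓ := S.max' ⟨k, hkS⟩ with hℓdef
      have hℓS : ℓ ∈ S := S.max'_mem ⟨k, hkS⟩
      rw [hSdef, Finset.mem_filter, Finset.mem_Ico] at hℓS
      obtain ⟨⟨hkℓ, hℓn⟩, hτℓ⟩ := hℓS
      have hnext : τ n - τ (ℓ+1) ≤ (τ n - τ k) / 2 := by
        rcases Nat.eq_or_lt_of_le (Nat.succ_le_of_lt hℓn) with heq | hlt
        · rw [show ℓ+1 = n from heq]; linarith
        · by_contra hcon
          push_neg at hcon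
          have hmem : ℓ + 1 ∈ S := by
            rw [hSdef, Finset.mem_filter, Finset.mem_Ico]
            exact ⟨⟨by omega, hlt⟩, by linarith⟩
          have := S.le_max' _ hmem
          omega
      have hℓN : ℓ ≤ N := by omega
      have habs1 : |τ n - τ k| = τ n - τ k := abs_of_nonneg hΔpos.le
      have habs2 : |τ k - τ ℓ| = τ ℓ - τ k := by
        rw [abs_sub_comm]
        exact abs_of_nonneg (sub_nonneg.mpr (mono ℓ hℓN k hkℓ))
      have habs3 : |τ n - τ (ℓ+1)| = τ n - τ (ℓ+1) :=
        abs_of_nonneg (sub_nonneg.mpr (mono n hnN (ℓ+1) (by omega)))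
      have hrec' := hrec k ℓ n hkℓ hℓn hnN
        (by rw [habs1, habs2]; linarith) (by rw [habs1, habs3]; linarith)
      rw [habs1] at hrec'
      set K : ℝ := R * D * (LS + 2) * h ^ (γ - ε) / (1 - (1 + (2:ℝ) ^ (-(ε/6))) / 2) with hKdef
      set Δ : ℝ := τ n - τ k with hΔdef
      have ih1 : u k ℓ ≤ K * (Δ/2) ^ ((1:ℝ) + ε/6) * Real.exp (lam * (Δ/2)) := by
        refine (ih k ℓ hkℓ hℓN (by omega)).trans ?_
        exact aux_mono K lam _ _ _ hK0 hlam.le (by linarith)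
          (sub_nonneg.mpr (mono ℓ hℓN k hkℓ)) (by linarith)
      have ih2 : u (ℓ+1) n ≤ K * (Δ/2) ^ ((1:ℝ) + ε/6) * Real.exp (lam * (Δ/2)) := by
        refine (ih (ℓ+1) n (by omega) hnN (by omega)).trans ?_
        exact aux_mono K lam _ _ _ hK0 hlam.le (by linarith)
          (sub_nonneg.mpr (mono n hnN (ℓ+1) (by omega))) (by linarith)
      have hxnn : 0 ≤ D * (LS + 1) * Δ ^ ((1:ℝ)/2 - ε) := by
        have := Real.rpow_nonneg hΔpos.le ((1:ℝ)/2 - ε)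
        positivity
      have hfac : (0:ℝ) ≤ 1 + D * (LS + 1) * Δ ^ ((1:ℝ)/2 - ε) := by linarith
      have hC2term : R * D * (LS + 2) * Δ ^ (1 + ε/6) * h ^ (γ - ε)
          = R * D * (LS + 2) * h ^ (γ - ε) * Δ ^ ((1:ℝ) + ε/6) := by ring
      calc u k n ≤ u k ℓ * (1 + D * (LS + 1) * Δ ^ ((1:ℝ)/2 - ε)) + u (ℓ+1) n
            + R * D * (LS + 2) * h ^ (γ - ε) * Δ ^ ((1:ℝ) + ε/6) := by
            rw [← hC2term]; exact hrec'
        _ ≤ K * (Δ/2) ^ ((1:ℝ) + ε/6) * Real.exp (lam * (Δ/2))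
              * (1 + D * (LS + 1) * Δ ^ ((1:ℝ)/2 - ε))
            + K * (Δ/2) ^ ((1:ℝ) + ε/6) * Real.exp (lam * (Δ/2))
            + R * D * (LS + 2) * h ^ (γ - ε) * Δ ^ ((1:ℝ) + ε/6) := by
            have := mul_le_mul_of_nonneg_right ih1 hfac
            linarith
        _ ≤ K * Δ ^ ((1:ℝ) + ε/6) * Real.exp (lam * Δ) := by
            rw [hKdef]
            exact aux_step ε (R * D * (LS + 2) * h ^ (γ - ε)) Δ lam
              (D * (LS + 1) * Δ ^ ((1:ℝ)/2 - ε)) hε hΔpos hC2 hlam.le hxnn (hxb Δ hΔpos)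
  -- conclude
  intro n hnN
  have hkey := key n 0 n (Nat.zero_le n) hnN (by omega)
  rw [hτ0, sub_zero] at hkey
  have hτn0 : 0 ≤ τ n := by rw [← hτ0]; exact mono n hnN 0 (Nat.zero_le n)
  have hτnT : τ n ≤ T := by rw [← hτN]; exact mono N le_rfl n hnN
  have hmono := aux_mono (R * D * (LS + 2) * h ^ (γ - ε) / (1 - (1 + (2:ℝ) ^ (-(ε/6))) / 2))
    lam ((1:ℝ) + ε/6) (τ n) T hK0 hlam.le (by linarith) hτn0 hτnT
  refine hkey.trans (hmono.trans (le_of_eq ?_))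
  field_simp
end
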